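/- arXiv:2203.07968 — 4 statements merged into one kernel-verified Lean document; each statement's English description precedes it below -/
import Mathlib

section
/- Let {K_λ}_{λ∈Λ} be a family of positive cones with K₁ ⊆ K_λ ⊆ K₂ for fixed positive cones K₁, K₂. Then the dual of the intersection equals the closed sum of the duals: (⋂_λ K_λ)* = Σ_λ K_λ*. -/
open scoped RealInnerProductSpace

variable {V : Type*} [NormedAddCommGroup V] [InnerProductSpace ℝ V] [FiniteDimensional ℝ V]

/-- The dual cone of a set with respect to the real inner product. -/
def dualCone (K : Set V) : Set V := {x | ∀ y ∈ K, 0 ≤ ⟪x, y⟫}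

/-- A positive cone: closed, convex, with nonempty interior, closed under nonnegative
scalar multiplication and addition, and pointed. -/
def IsPositiveCone (K : Set V) : Prop :=
  IsClosed K ∧ Convex ℝ K ∧ (interior K).Nonempty ∧
  (∀ x ∈ K, ∀ c : ℝ, 0 ≤ c → c • x ∈ K) ∧
  (∀ x ∈ K, ∀ y ∈ K, x + y ∈ K) ∧
  K ∩ (-K) = {0}

/-- The closed sum of a family of cones: the closure of the set of all finite sums of
elements chosen from the cones. -/
def coneSum {ι : Type*} (K : ι → Set V) : Set V :=
  closure {x | ∃ (I : Finset ι) (f : ι → V), (∀ i ∈ I, f i ∈ K i) ∧ x = ∑ i ∈ I, f i}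

lemma dualCone_eq_innerDualCone (s : Set V) :
    dualCone s = (ProperCone.innerDual s : Set V) := by
  ext x
  simp only [dualCone, Set.mem_setOf_eq, SetLike.mem_coe, ProperCone.mem_innerDual]
  exact ⟨fun h y hy => by rw [real_inner_comm]; exact h y hy,
    fun h y hy => by rw [real_inner_comm]; exact h hy⟩

lemma isClosed_dualCone (s : Set V) : IsClosed (dualCone s) := by
  rw [dualCone_eq_innerDualCone]; exact (ProperCone.innerDual s).isClosed

lemma dualCone_anti {s t : Set V} (h : s ⊆ t) : dualCone t ⊆ dualCone s :=
  fun x hx y hy => hx y (h hy)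

lemma ConvexCone.innerDualCone_of_innerDualCone_eq_self' (K : ConvexCone ℝ V)
    (h0 : (0 : V) ∈ K) (hc : IsClosed (K : Set V)) :
    (ProperCone.innerDual (ProperCone.innerDual (K : Set V) : Set V) : Set V) = K := by
  let K' : ProperCone ℝ V :=
    { toSubmodule :=
        { carrier := K
          add_mem' := fun ha hb => K.add_mem ha hb
          zero_mem' := h0
          smul_mem' := fun c x hx => by
            rcases eq_or_lt_of_le c.2 with hc0 | hc0
            · have : c = 0 := NNReal.eq hc0.symm
              subst this; simpa using h0
            · exact K.smul_mem hc0 hx }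
      isClosed' := hc }
  exact congrArg (fun C : ProperCone ℝ V => (C : Set V)) (ProperCone.innerDual_innerDual K')

/-- Build a `ConvexCone` from a positive cone. -/
def IsPositiveCone.toCone {K : Set V} (h : IsPositiveCone K) : ConvexCone ℝ V where
  carrier := K
  smul_mem' := fun c hc x hx => h.2.2.2.1 x hx c hc.le
  add_mem' := fun x hx y hy => h.2.2.2.2.1 x hx y hy

lemma IsPositiveCone.zero_mem {K : Set V} (h : IsPositiveCone K) : (0 : V) ∈ K := by
  obtain ⟨x, hx⟩ := h.2.2.1
  have hxK : x ∈ K := interior_subset hx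
  simpa using h.2.2.2.1 x hxK 0 le_rfl

lemma IsPositiveCone.bidual {K : Set V} (h : IsPositiveCone K) :
    dualCone (dualCone K) = K := by
  have := h.toCone.innerDualCone_of_innerDualCone_eq_self' h.zero_mem h.1
  rw [dualCone_eq_innerDualCone, dualCone_eq_innerDualCone]
  have hK : (h.toCone : Set V) = K := rfl
  rw [← hK]
  exact this

theorem dualCone_iInter_eq_coneSum_dualCone {ι : Type*} [Nonempty ι] (Ks : ι → Set V)
    (hpos : ∀ l, IsPositiveCone (Ks l))
    (K₁ K₂ : Set V) (h₁ : IsPositiveCone K₁) (h₂ : IsPositiveCone K₂)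
    (hsub : ∀ l, K₁ ⊆ Ks l) (hsup : ∀ l, Ks l ⊆ K₂) :
    dualCone (⋂ l, Ks l) = coneSum (fun l => dualCone (Ks l)) := by
  classical
  set S : Set V := {x | ∃ (I : Finset ι) (f : ι → V),
      (∀ i ∈ I, f i ∈ dualCone (Ks i)) ∧ x = ∑ i ∈ I, f i} with hS
  have hzero : ∀ i, (0 : V) ∈ dualCone (Ks i) := fun i y _ => by simp
  -- S is a convex cone
  have hsmul : ∀ c : ℝ, 0 < c → ∀ x ∈ S, c • x ∈ S := by
    rintro c hc x ⟨I, f, hf, rfl⟩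
    exact ⟨I, fun i => c • f i, fun i hi y hy => by
      rw [inner_smul_left]
      exact mul_nonneg (by exact_mod_cast hc.le) (hf i hi y hy),
      by rw [Finset.smul_sum]⟩
  have hadd : ∀ x ∈ S, ∀ y ∈ S, x + y ∈ S := by
    rintro x ⟨I, f, hf, rfl⟩ y ⟨J, g, hg, rfl⟩
    refine ⟨I ∪ J, fun i => (if i ∈ I then f i else 0) + (if i ∈ J then g i else 0),
      fun i _hi => ?_, ?_⟩
    · dsimp only
      have hmem : ∀ a ∈ dualCone (Ks i), ∀ b ∈ dualCone (Ks i), a + b ∈ dualCone (Ks i) :=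
        fun a ha b hb y hy => by rw [inner_add_left]; exact add_nonneg (ha y hy) (hb y hy)
      refine hmem _ ?_ _ ?_
      · split_ifs with h; exacts [hf i h, hzero i]
      · split_ifs with h; exacts [hg i h, hzero i]
    · rw [Finset.sum_add_distrib, Finset.sum_ite_mem, Finset.sum_ite_mem,
        Finset.union_inter_cancel_left, Finset.union_inter_cancel_right]
  let C : ConvexCone ℝ V :=
    { carrier := S
      smul_mem' := hsmul
      add_mem' := hadd }
  have hSzero : (0 : V) ∈ S := ⟨∅, fun _ => 0, by simp, by simp⟩
  have hCc : (C.closure : Set V) = closure S := C.coe_closure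
  have hcs : coneSum (fun l => dualCone (Ks l)) = (C.closure : Set V) := by
    rw [hCc]; rfl
  -- dual cone singleton inclusion: dualCone (Ks l) ⊆ S
  have hsingle : ∀ l, dualCone (Ks l) ⊆ S := by
    intro l z hz
    exact ⟨{l}, fun _ => z, fun i hi => by
      rw [Finset.mem_singleton] at hi; subst hi; exact hz, by simp⟩
  -- easy inclusion: coneSum ⊆ dualCone (⋂ Ks)
  have easy : coneSum (fun l => dualCone (Ks l)) ⊆ dualCone (⋂ l, Ks l) := by
    apply (isClosed_dualCone _).closure_subset_iff.2
    rintro x ⟨I, f, hf, rfl⟩ y hy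
    rw [sum_inner]
    apply Finset.sum_nonneg
    intro i hi
    exact hf i hi y (Set.mem_iInter.1 hy i)
  -- dualCone S ⊆ ⋂ Ks
  have hdS : dualCone S ⊆ ⋂ l, Ks l := by
    intro y hy
    rw [Set.mem_iInter]
    intro l
    rw [← (hpos l).bidual]
    exact fun z hz => hy z (hsingle l hz)
  -- hard inclusion via bidual of C.closure
  have hCcl : IsClosed (C.closure : Set V) := by rw [hCc]; exact isClosed_closure
  have hCne : ((C.closure : ConvexCone ℝ V) : Set V).Nonempty :=
    ⟨0, by rw [hCc]; exact subset_closure hSzero⟩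
  have hbid := C.closure.innerDualCone_of_innerDualCone_eq_self'
    (by rw [ConvexCone.mem_closure]; exact subset_closure hSzero) hCcl
  rw [hcs]
  apply Set.Subset.antisymm _ (by rw [← hcs]; exact easy)
  intro x hx
  have : x ∈ (ProperCone.innerDual (ProperCone.innerDual ((C.closure : ConvexCone ℝ V) :
      Set V) : Set V) : Set V) := by
    intro y hy
    have hyS : y ∈ dualCone S := by
      intro z hz
      rw [real_inner_comm]
      exact hy ((hCc ▸ subset_closure hz : z ∈ (C.closure : Set V)))
    change 0 ≤ ⟪y, x⟫; rw [real_inner_comm]; exact hx y (hdS hyS)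
  rwa [hbid] at this
end

section
/- If K is a pre-dual cone and ρ ∈ K, then the cone K' := (K* + cone{ρ})* is also pre-dual, i.e., K'* ⊆ K'. -/
open scoped RealInnerProductSpace

variable {V : Type*} [NormedAddCommGroup V] [InnerProductSpace ℝ V] [FiniteDimensional ℝ V]

open scoped Pointwise in
theorem predual_of_add_ray (K : Set V) (hK : IsPositiveCone K) (hpre : dualCone K ⊆ K)
    (ρ : V) (hρ : ρ ∈ K) (hρ0 : ρ ≠ 0) :
    dualCone (dualCone (dualCone K + {x | ∃ c : ℝ, 0 ≤ c ∧ x = c • ρ})) ⊆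
      dualCone (dualCone K + {x | ∃ c : ℝ, 0 ≤ c ∧ x = c • ρ}) := by
  set S : Set V := dualCone K + {x | ∃ c : ℝ, 0 ≤ c ∧ x = c • ρ} with hS
  have hself : S ⊆ dualCone S := by
    rintro x ⟨x₀, hx₀, xr, ⟨s, hs, rfl⟩, rfl⟩ y ⟨y₀, hy₀, yr, ⟨t, ht, rfl⟩, rfl⟩
    have hx₀y₀ : (0:ℝ) ≤ ⟪x₀, y₀⟫ := hx₀ y₀ (hpre hy₀)
    have hx₀ρ : (0:ℝ) ≤ ⟪x₀, ρ⟫ := hx₀ ρ hρ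
    have hy₀ρ : (0:ℝ) ≤ ⟪y₀, ρ⟫ := hy₀ ρ hρ
    have hρρ : (0:ℝ) ≤ ⟪ρ, ρ⟫ := real_inner_self_nonneg
    have hρx₀ : (0:ℝ) ≤ ⟪ρ, x₀⟫ := by rwa [real_inner_comm]
    simp only [inner_add_left, inner_add_right,
      real_inner_smul_left, real_inner_smul_right]
    have := mul_nonneg hs hx₀ρ
    have := mul_nonneg ht hx₀ρ
    have := mul_nonneg hs hρx₀
    have := mul_nonneg hs hy₀ρ
    have := mul_nonneg (mul_nonneg hs ht) hρρ
    nlinarith [mul_nonneg hs hy₀ρ, real_inner_comm ρ y₀, mul_nonneg (mul_nonneg ht hs) hρρ]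
  intro x hx
  intro y hy
  exact hx y (hself hy)
end

section
/- Let H_A and H_B be finite-dimensional Hilbert spaces with dim H_A = dim H_B = d. Let {E_k}_{k=1}^{d²} be a family of mutually orthogonal rank-one projections onto maximally entangled states of H_A ⊗ H_B, and let 0 ≤ r ≤ (√d − 1)/2. Then the Hermitian matrix N := −r E₁ + (1+r) E₂ + (1/2) Σ_{k=3}^{d²} E_k satisfies Tr(N σ) ≥ 0 for every separable state σ (i.e., N lies in the dual cone of the separable cone). -/
open scoped ComplexOrder Kronecker

/-- A maximally entangled orthogonal projection on `H_A ⊗ H_B` (with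
`dim H_A = dim H_B = d`): a rank-one (trace-one) Hermitian projection whose
reduced matrices on both subsystems equal `I/d`. -/
def IsMEProj (d : ℕ) (E : Matrix (Fin d × Fin d) (Fin d × Fin d) ℂ) : Prop :=
  E.IsHermitian ∧ E * E = E ∧ E.trace = 1 ∧
  (∀ a a' : Fin d, (∑ b : Fin d, E (a, b) (a', b)) = if a = a' then ((d : ℂ))⁻¹ else 0) ∧
  (∀ b b' : Fin d, (∑ a : Fin d, E (a, b) (a, b')) = if b = b' then ((d : ℂ))⁻¹ else 0)

/-- A separable state: a trace-one matrix that is a finite sum of Kronecker products of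
positive semidefinite matrices. -/
def IsSeparableState (dA dB : ℕ) (σ : Matrix (Fin dA × Fin dB) (Fin dA × Fin dB) ℂ) : Prop :=
  σ.trace = 1 ∧
  ∃ (m : ℕ) (a : Fin m → Matrix (Fin dA) (Fin dA) ℂ)
    (b : Fin m → Matrix (Fin dB) (Fin dB) ℂ),
    (∀ k, (a k).PosSemidef) ∧ (∀ k, (b k).PosSemidef) ∧ σ = ∑ k, a k ⊗ₖ b k

section PortHelper

open scoped MatrixOrder Matrix

theorem Matrix.posSemidef_iff_eq_transpose_mul_self {n : Type*} [Fintype n] [DecidableEq n]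
    {A : Matrix n n ℂ} : A.PosSemidef ↔ ∃ B : Matrix n n ℂ, A = Bᴴ * B := by
  constructor
  · intro h
    obtain ⟨B, hB⟩ := CStarAlgebra.nonneg_iff_eq_star_mul_self.mp h.nonneg
    exact ⟨B, hB⟩
  · rintro ⟨B, rfl⟩
    exact Matrix.posSemidef_conjTranspose_mul_self B

end PortHelper

namespace NPMAux

open Matrix Finset

variable {p q r s : Type*} [Fintype p] [Fintype q] [DecidableEq p] [DecidableEq q]

/-- trace of `Aᴴ * A` is nonnegative. -/
lemma trace_conjTranspose_mul_self_nonneg (A : Matrix p q ℂ) :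
    0 ≤ (Aᴴ * A).trace := by
  rw [Matrix.trace]
  refine Finset.sum_nonneg fun j _ => ?_
  rw [Matrix.diag_apply, Matrix.mul_apply]
  refine Finset.sum_nonneg fun i _ => ?_
  simpa [Matrix.conjTranspose_apply] using star_mul_self_nonneg (A i j)

/-- trace of `Aᴴ * A` is zero implies `A = 0`. -/
lemma eq_zero_of_trace_conjTranspose_mul_self (A : Matrix p q ℂ)
    (h : (Aᴴ * A).trace = 0) : A = 0 := by
  have h' : (∑ j, ∑ i, Complex.normSq (A i j) : ℝ) = 0 := by
    have : (Aᴴ * A).trace = ((∑ j, ∑ i, Complex.normSq (A i j) : ℝ) : ℂ) := by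
      rw [Matrix.trace]
      push_cast
      refine Finset.sum_congr rfl fun j _ => ?_
      rw [Matrix.diag_apply, Matrix.mul_apply]
      refine Finset.sum_congr rfl fun i _ => ?_
      simp [Matrix.conjTranspose_apply, Complex.star_def, Complex.normSq_eq_conj_mul_self]
    rw [this] at h
    exact_mod_cast h
  ext i j
  have h2 : ∀ j ∈ (Finset.univ : Finset q), (∑ i, Complex.normSq (A i j) : ℝ) = 0 := by
    refine (Finset.sum_eq_zero_iff_of_nonneg fun j _ => ?_).1 h'
    exact Finset.sum_nonneg fun i _ => Complex.normSq_nonneg _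
  have h3 : Complex.normSq (A i j) = 0 := by
    have := (Finset.sum_eq_zero_iff_of_nonneg fun i _ => Complex.normSq_nonneg (A i j)).1
      (h2 j (Finset.mem_univ j)) i (Finset.mem_univ i)
    exact this
  simpa using Complex.normSq_eq_zero.1 h3

/-- nonnegativity of trace of product of PSD matrices. -/
lemma trace_mul_nonneg {A B : Matrix p p ℂ} (hA : A.PosSemidef) (hB : B.PosSemidef) :
    0 ≤ (A * B).trace := by
  obtain ⟨F, hF⟩ := Matrix.posSemidef_iff_eq_transpose_mul_self.1 hA
  obtain ⟨G, hG⟩ := Matrix.posSemidef_iff_eq_transpose_mul_self.1 hB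
  have key : (A * B).trace = ((F * Gᴴ)ᴴ * (F * Gᴴ)).trace := by
    rw [hF, hG, Matrix.conjTranspose_mul, Matrix.conjTranspose_conjTranspose,
      show Fᴴ * F * (Gᴴ * G) = Fᴴ * (F * Gᴴ) * G by simp only [Matrix.mul_assoc],
      Matrix.trace_mul_cycle]
  rw [key]
  exact trace_conjTranspose_mul_self_nonneg _

lemma conjTranspose_kronecker (A : Matrix p p ℂ) (B : Matrix q q ℂ) :
    (A ⊗ₖ B)ᴴ = Aᴴ ⊗ₖ Bᴴ := by
  ext ⟨i, j⟩ ⟨k, l⟩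
  simp [Matrix.conjTranspose_apply, Matrix.kroneckerMap_apply, star_mul']

lemma posSemidef_kronecker {A : Matrix p p ℂ} {B : Matrix q q ℂ}
    (hA : A.PosSemidef) (hB : B.PosSemidef) : (A ⊗ₖ B).PosSemidef := by
  obtain ⟨F, hF⟩ := Matrix.posSemidef_iff_eq_transpose_mul_self.1 hA
  obtain ⟨G, hG⟩ := Matrix.posSemidef_iff_eq_transpose_mul_self.1 hB
  have : A ⊗ₖ B = (F ⊗ₖ G)ᴴ * (F ⊗ₖ G) := by
    rw [conjTranspose_kronecker, ← Matrix.mul_kronecker_mul, ← hF, ← hG]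
  rw [this]
  exact Matrix.posSemidef_conjTranspose_mul_self _

lemma kronecker_sum' {m : Type*} (t : Finset m) (A : Matrix p p ℂ) (B : m → Matrix q q ℂ) :
    A ⊗ₖ (∑ j ∈ t, B j) = ∑ j ∈ t, A ⊗ₖ B j := by
  ext ⟨i, j⟩ ⟨k, l⟩
  simp [Matrix.kroneckerMap_apply, Matrix.sum_apply, Finset.mul_sum]

lemma kronecker_sub' (A : Matrix p p ℂ) (B C : Matrix q q ℂ) :
    A ⊗ₖ (B - C) = A ⊗ₖ B - A ⊗ₖ C := by
  ext ⟨i, j⟩ ⟨k, l⟩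
  simp [Matrix.kroneckerMap_apply, Matrix.sub_apply, mul_sub]

/-- `‖y‖² • 1 - y yᴴ` is positive semidefinite. -/
lemma psd_norm_smul_one_sub_vecMulVec (y : q → ℂ) :
    (((∑ i, Complex.normSq (y i) : ℝ) : ℂ) • (1 : Matrix q q ℂ)
      - Matrix.vecMulVec y (star y)).PosSemidef := by
  set c : ℝ := ∑ i, Complex.normSq (y i) with hc
  have hc0 : 0 ≤ c := Finset.sum_nonneg fun i _ => Complex.normSq_nonneg _
  set M : Matrix q q ℂ := (c : ℂ) • (1 : Matrix q q ℂ) - Matrix.vecMulVec y (star y) with hM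
  have hsum : (∑ i, star (y i) * y i) = (c : ℂ) := by
    rw [hc]
    push_cast
    exact Finset.sum_congr rfl fun i _ => by
      simp [Complex.star_def, Complex.normSq_eq_conj_mul_self]
  have hPP : Matrix.vecMulVec y (star y) * Matrix.vecMulVec y (star y)
      = (c : ℂ) • Matrix.vecMulVec y (star y) := by
    ext i j
    rw [Matrix.mul_apply]
    simp only [Matrix.vecMulVec_apply, Matrix.smul_apply, Pi.star_apply, smul_eq_mul]
    rw [← hsum, Finset.sum_mul]
    exact Finset.sum_congr rfl fun k _ => by ring
  have hMH : Mᴴ = M := by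
    rw [hM]
    ext i j
    simp only [Matrix.conjTranspose_apply, Matrix.sub_apply, Matrix.smul_apply,
      Matrix.vecMulVec_apply, Matrix.one_apply, Pi.star_apply, star_sub, star_mul',
      star_star, smul_eq_mul, mul_ite, mul_one, mul_zero]
    rcases eq_or_ne i j with h | h
    · simp [h, Complex.conj_ofReal, mul_comm]
    · simp [h, Ne.symm h, mul_comm]
  have hMM : M * M = (c : ℂ) • M := by
    rw [hM]
    rw [Matrix.sub_mul, Matrix.mul_sub, Matrix.mul_sub, hPP]
    simp only [Matrix.smul_mul, Matrix.mul_smul, Matrix.one_mul, Matrix.mul_one]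
    rw [smul_sub]
    abel_nf
  rcases eq_or_lt_of_le hc0 with h0 | hpos
  · -- c = 0, so y = 0 and M = 0
    have hy : ∀ i, y i = 0 := by
      intro i
      have := (Finset.sum_eq_zero_iff_of_nonneg
        (fun i _ => Complex.normSq_nonneg (y i))).1 h0.symm i (Finset.mem_univ i)
      exact Complex.normSq_eq_zero.1 this
    have : M = 0 := by
      rw [hM, ← h0]
      ext i j
      simp [Matrix.vecMulVec_apply, hy]
    rw [this]
    exact Matrix.PosSemidef.zero
  · set s : ℝ := (Real.sqrt c)⁻¹ with hs
    have hsq : s * s * c = 1 := by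
      rw [hs]
      have h1 : Real.sqrt c * Real.sqrt c = c := Real.mul_self_sqrt hc0
      have h2 : Real.sqrt c ≠ 0 := by positivity
      field_simp
      rw [sq, h1]
    have hM2 : M = ((s : ℂ) • M)ᴴ * ((s : ℂ) • M) := by
      rw [Matrix.conjTranspose_smul, hMH]
      rw [Matrix.smul_mul, Matrix.mul_smul, hMM]
      rw [smul_smul, smul_smul]
      have h3 : star ((s : ℂ)) * ((s : ℂ)) * ((c : ℂ)) = 1 := by
        rw [Complex.star_def, Complex.conj_ofReal]
        rw [show ((s : ℂ)) * ((s : ℂ)) * ((c : ℂ)) = (((s * s * c : ℝ)) : ℂ) by push_cast; ring]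
        rw [hsq]
        norm_num
      rw [h3, one_smul]
    rw [hM2]
    exact Matrix.posSemidef_conjTranspose_mul_self _

variable {d : ℕ}

lemma mep_posSemidef {E : Matrix (Fin d × Fin d) (Fin d × Fin d) ℂ}
    (hE : IsMEProj d E) : E.PosSemidef := by
  obtain ⟨hH, hI, -, -, -⟩ := hE
  have : E = Eᴴ * E := by rw [hH.eq, hI]
  rw [this]
  exact Matrix.posSemidef_conjTranspose_mul_self _

/-- partial-trace computation: `Tr(E (a ⊗ 1)) = Tr a / d`. -/
lemma trace_mep_mul_kron_one {E : Matrix (Fin d × Fin d) (Fin d × Fin d) ℂ}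
    (hE : IsMEProj d E) (a : Matrix (Fin d) (Fin d) ℂ) :
    (E * (a ⊗ₖ (1 : Matrix (Fin d) (Fin d) ℂ))).trace = ((d : ℂ))⁻¹ * a.trace := by
  obtain ⟨-, -, -, h4, -⟩ := hE
  rw [Matrix.trace]
  have step1 : ∀ (α β : Fin d), (E * (a ⊗ₖ (1 : Matrix (Fin d) (Fin d) ℂ))).diag (α, β)
      = ∑ α' : Fin d, E (α, β) (α', β) * a α' α := by
    intro α β
    rw [Matrix.diag_apply, Matrix.mul_apply]
    rw [Fintype.sum_prod_type]
    refine Finset.sum_congr rfl fun α' _ => ?_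
    simp [Matrix.kroneckerMap_apply, Matrix.one_apply, mul_ite]
  rw [Fintype.sum_prod_type]
  calc ∑ α : Fin d, ∑ β : Fin d, (E * (a ⊗ₖ (1 : Matrix (Fin d) (Fin d) ℂ))).diag (α, β)
      = ∑ α : Fin d, ∑ β : Fin d, ∑ α' : Fin d, E (α, β) (α', β) * a α' α := by
        exact Finset.sum_congr rfl fun α _ => Finset.sum_congr rfl fun β _ => step1 α β
    _ = ∑ α : Fin d, ∑ α' : Fin d, (∑ β : Fin d, E (α, β) (α', β)) * a α' α := by
        refine Finset.sum_congr rfl fun α _ => ?_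
        rw [Finset.sum_comm]
        exact Finset.sum_congr rfl fun α' _ => (Finset.sum_mul _ _ _).symm
    _ = ∑ α : Fin d, ((d : ℂ))⁻¹ * a α α := by
        refine Finset.sum_congr rfl fun α _ => ?_
        rw [Finset.sum_eq_single α]
        · rw [h4 α α, if_pos rfl]
        · intro α' _ hne
          rw [h4 α α', if_neg (by exact fun h => hne (h.symm)), zero_mul]
        · intro h; exact absurd (Finset.mem_univ α) h
    _ = ((d : ℂ))⁻¹ * a.trace := by
        rw [Matrix.trace, Finset.mul_sum]
        rfl

/-- key bound: `Tr(E (a ⊗ b)) ≤ Tr a · Tr b / d` for PSD `a, b`. -/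
lemma trace_mep_mul_kron_le {E : Matrix (Fin d × Fin d) (Fin d × Fin d) ℂ}
    (hE : IsMEProj d E) {a b : Matrix (Fin d) (Fin d) ℂ}
    (ha : a.PosSemidef) (hb : b.PosSemidef) :
    (E * (a ⊗ₖ b)).trace ≤ ((d : ℂ))⁻¹ * a.trace * b.trace := by
  obtain ⟨G, hG⟩ := Matrix.posSemidef_iff_eq_transpose_mul_self.1 hb
  set y : Fin d → Fin d → ℂ := fun j i => star (G j i) with hy
  have hbdec : b = ∑ j : Fin d, Matrix.vecMulVec (y j) (star (y j)) := by
    rw [hG]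
    ext i i'
    rw [Matrix.mul_apply]
    simp [Matrix.vecMulVec_apply, Matrix.sum_apply, hy, Matrix.conjTranspose_apply]
  set c : Fin d → ℝ := fun j => ∑ i, Complex.normSq (y j i) with hcdef
  have htraceb : b.trace = ((∑ j, c j : ℝ) : ℂ) := by
    rw [hbdec, Matrix.trace_sum]
    push_cast
    refine Finset.sum_congr rfl fun j _ => ?_
    have : (Matrix.vecMulVec (y j) (star (y j))).trace
        = ∑ i, (y j i) * star (y j i) := by
      rw [Matrix.trace]
      exact Finset.sum_congr rfl fun i _ => by
        simp [Matrix.vecMulVec_apply, Matrix.diag_apply]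
    rw [this, hcdef]
    push_cast
    exact Finset.sum_congr rfl fun i _ => by
      simp [Complex.star_def, Complex.mul_conj]
  have key : ∀ j : Fin d,
      (E * (a ⊗ₖ Matrix.vecMulVec (y j) (star (y j)))).trace
        ≤ ((c j : ℝ) : ℂ) * (((d : ℂ))⁻¹ * a.trace) := by
    intro j
    have hpsd : (a ⊗ₖ (((c j : ℝ) : ℂ) • (1 : Matrix (Fin d) (Fin d) ℂ)
        - Matrix.vecMulVec (y j) (star (y j)))).PosSemidef :=
      posSemidef_kronecker ha (psd_norm_smul_one_sub_vecMulVec (y j))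
    have h0 := trace_mul_nonneg (mep_posSemidef hE) hpsd
    rw [kronecker_sub', Matrix.kronecker_smul, Matrix.mul_sub, Matrix.trace_sub,
      Matrix.mul_smul, Matrix.trace_smul, trace_mep_mul_kron_one hE a] at h0
    rw [sub_nonneg] at h0
    simpa [smul_eq_mul] using h0
  calc (E * (a ⊗ₖ b)).trace
      = ∑ j : Fin d, (E * (a ⊗ₖ Matrix.vecMulVec (y j) (star (y j)))).trace := by
        rw [hbdec, kronecker_sum', Matrix.mul_sum, Matrix.trace_sum]
    _ ≤ ∑ j : Fin d, ((c j : ℝ) : ℂ) * (((d : ℂ))⁻¹ * a.trace) :=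
        Finset.sum_le_sum fun j _ => key j
    _ = ((d : ℂ))⁻¹ * a.trace * b.trace := by
        rw [← Finset.sum_mul, htraceb]
        push_cast
        ring

/-- sum of the orthogonal family is the identity. -/
lemma sum_mep_eq_one (hd : 1 < d)
    (E : Fin (d ^ 2) → Matrix (Fin d × Fin d) (Fin d × Fin d) ℂ)
    (hME : ∀ k, IsMEProj d (E k))
    (horth : ∀ k l, k ≠ l → E k * E l = 0) :
    ∑ k, E k = 1 := by
  set P : Matrix (Fin d × Fin d) (Fin d × Fin d) ℂ := ∑ k, E k with hP
  have hPP : P * P = P := by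
    rw [hP, Finset.sum_mul_sum]
    rw [show ∑ k : Fin (d ^ 2), ∑ l : Fin (d ^ 2), E k * E l = ∑ k : Fin (d ^ 2), E k from ?_]
    refine Finset.sum_congr rfl fun k _ => ?_
    rw [Finset.sum_eq_single k]
    · exact (hME k).2.1
    · intro l _ hne
      exact horth k l (fun h => hne h.symm)
    · intro h; exact absurd (Finset.mem_univ k) h
  have hPH : Pᴴ = P := by
    rw [hP, Matrix.conjTranspose_sum]
    exact Finset.sum_congr rfl fun k _ => (hME k).1.eq
  have htrP : P.trace = ((d ^ 2 : ℕ) : ℂ) := by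
    rw [hP, Matrix.trace_sum]
    rw [Finset.sum_congr rfl fun k _ => (hME k).2.2.1]
    simp
  set Q : Matrix (Fin d × Fin d) (Fin d × Fin d) ℂ := 1 - P with hQ
  have hQH : Qᴴ = Q := by rw [hQ, Matrix.conjTranspose_sub, Matrix.conjTranspose_one, hPH]
  have hQQ : Q * Q = Q := by
    rw [hQ, Matrix.sub_mul, Matrix.mul_sub, Matrix.mul_sub, hPP]
    simp only [Matrix.one_mul, Matrix.mul_one]
    abel
  have htrQ : Q.trace = 0 := by
    rw [hQ, Matrix.trace_sub, Matrix.trace_one, htrP]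
    have : Fintype.card (Fin d × Fin d) = d ^ 2 := by simp [sq]
    rw [this]
    ring
  have hQeq : Q = Qᴴ * Q := by rw [hQH, hQQ]
  have hQ0 : Q = 0 := by
    have := eq_zero_of_trace_conjTranspose_mul_self Q (by rw [← hQeq, htrQ])
    rw [hQeq, this]
    simp
  have hP1 : P = 1 := by
    have h := hQ0
    rw [hQ] at h
    linear_combination (norm := module) -h
  exact hP1

end NPMAux

theorem npm_mem_dual_sep (d : ℕ) (hd : 1 < d)
    (E : Fin (d ^ 2) → Matrix (Fin d × Fin d) (Fin d × Fin d) ℂ)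
    (hME : ∀ k, IsMEProj d (E k))
    (horth : ∀ k l, k ≠ l → E k * E l = 0)
    (r : ℝ) (hr0 : 0 ≤ r) (hr : r ≤ (Real.sqrt d - 1) / 2)
    (N : Matrix (Fin d × Fin d) (Fin d × Fin d) ℂ)
    (hN : N = (-(r : ℂ)) • E ⟨0, by nlinarith⟩ + ((1 + r : ℝ) : ℂ) • E ⟨1, by nlinarith⟩ +
        (1 / 2 : ℂ) • ∑ k ∈ Finset.univ.filter (fun k : Fin (d ^ 2) => (k : ℕ) ≠ 0 ∧ (k : ℕ) ≠ 1), E k) :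
    ∀ σ, IsSeparableState d d σ → 0 ≤ (N * σ).trace := by
  intro σ hσ
  obtain ⟨hσtr, m, a, b, ha, hb, hσdec⟩ := hσ
  have hd2 : 1 < d ^ 2 := by nlinarith
  set k0 : Fin (d ^ 2) := ⟨0, by nlinarith⟩ with hk0
  set k1 : Fin (d ^ 2) := ⟨1, by nlinarith⟩ with hk1
  have hk01 : k0 ≠ k1 := by
    simp [hk0, hk1, Fin.ext_iff]
  -- trace facts for each E k against σ
  have htnonneg : ∀ k, 0 ≤ (E k * σ).trace := by
    intro k
    rw [hσdec, Matrix.mul_sum, Matrix.trace_sum]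
    refine Finset.sum_nonneg fun j _ => ?_
    exact NPMAux.trace_mul_nonneg (NPMAux.mep_posSemidef (hME k))
      (NPMAux.posSemidef_kronecker (ha j) (hb j))
  have htle : ∀ k, (E k * σ).trace ≤ ((d : ℂ))⁻¹ := by
    intro k
    rw [hσdec, Matrix.mul_sum, Matrix.trace_sum]
    calc ∑ j, (E k * (a j ⊗ₖ b j)).trace
        ≤ ∑ j, ((d : ℂ))⁻¹ * (a j).trace * (b j).trace :=
          Finset.sum_le_sum fun j _ =>
            NPMAux.trace_mep_mul_kron_le (hME k) (ha j) (hb j)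
      _ = ((d : ℂ))⁻¹ * σ.trace := by
          rw [hσdec, Matrix.trace_sum, Finset.mul_sum]
          exact Finset.sum_congr rfl fun j _ => by
            rw [Matrix.trace_kronecker]; ring
      _ = ((d : ℂ))⁻¹ := by rw [hσtr, mul_one]
  -- the filtered sum
  have hfilter : (Finset.univ.filter (fun k : Fin (d ^ 2) => (k : ℕ) ≠ 0 ∧ (k : ℕ) ≠ 1))
      = Finset.univ \ {k0, k1} := by
    ext k
    simp [Finset.mem_sdiff, hk0, hk1, Fin.ext_iff]
  have hsumE : ∑ k, E k = 1 := NPMAux.sum_mep_eq_one hd E hME horth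
  have hsumfilter : ∑ k ∈ Finset.univ.filter
      (fun k : Fin (d ^ 2) => (k : ℕ) ≠ 0 ∧ (k : ℕ) ≠ 1), E k = 1 - E k0 - E k1 := by
    rw [hfilter, Finset.sum_sdiff_eq_sub (Finset.subset_univ _), hsumE,
      Finset.sum_pair hk01]
    abel
  -- expand trace of N * σ
  have hTrN : (N * σ).trace
      = (-(r : ℂ)) * (E k0 * σ).trace + ((1 + r : ℝ) : ℂ) * (E k1 * σ).trace
        + (1 / 2 : ℂ) * ((1 : ℂ) - (E k0 * σ).trace - (E k1 * σ).trace) := by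
    rw [hN, hsumfilter]
    rw [Matrix.add_mul, Matrix.add_mul, Matrix.smul_mul, Matrix.smul_mul, Matrix.smul_mul,
      Matrix.trace_add, Matrix.trace_add, Matrix.trace_smul, Matrix.trace_smul,
      Matrix.trace_smul]
    rw [Matrix.sub_mul, Matrix.sub_mul, Matrix.trace_sub, Matrix.trace_sub, Matrix.one_mul,
      hσtr]
    simp only [smul_eq_mul]
  -- extract real data
  have ht0 := Complex.le_def.1 (htnonneg k0)
  have ht1 := Complex.le_def.1 (htnonneg k1)
  have htl := Complex.le_def.1 (htle k0)
  simp only [Complex.zero_re, Complex.zero_im] at ht0 ht1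
  obtain ⟨ht0re, ht0im⟩ := ht0
  obtain ⟨ht1re, ht1im⟩ := ht1
  have hdinv : (((d : ℂ))⁻¹).re = ((d : ℝ))⁻¹ := by
    rw [show ((d : ℂ)) = (((d : ℝ)) : ℂ) by norm_cast, ← Complex.ofReal_inv,
      Complex.ofReal_re]
  have ht0le : (E k0 * σ).trace.re ≤ ((d : ℝ))⁻¹ := by
    have := htl.1
    rwa [hdinv] at this
  have e0 : (E k0 * σ).trace = (((E k0 * σ).trace.re : ℝ) : ℂ) := by
    apply Complex.ext
    · simp
    · simp [← ht0im]
  have e1 : (E k1 * σ).trace = (((E k1 * σ).trace.re : ℝ) : ℂ) := by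
    apply Complex.ext
    · simp
    · simp [← ht1im]
  set x : ℝ := (E k0 * σ).trace.re
  set z : ℝ := (E k1 * σ).trace.re
  rw [hTrN, e0, e1]
  have hcast : (-(r : ℂ)) * ((x : ℝ) : ℂ) + ((1 + r : ℝ) : ℂ) * ((z : ℝ) : ℂ)
      + (1 / 2 : ℂ) * ((1 : ℂ) - ((x : ℝ) : ℂ) - ((z : ℝ) : ℂ))
      = (((-r * x + (1 + r) * z + (1 / 2) * (1 - x - z) : ℝ)) : ℂ) := by
    push_cast
    ring
  rw [hcast]
  -- real arithmetic
  have hs : Real.sqrt d * Real.sqrt d = (d : ℝ) :=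
    Real.mul_self_sqrt (by positivity)
  have hs0 : 0 ≤ Real.sqrt d := Real.sqrt_nonneg _
  have hdR : (2 : ℝ) ≤ (d : ℝ) := by exact_mod_cast hd
  have hdpos : (0 : ℝ) < (d : ℝ) := by linarith
  have hx : x * (d : ℝ) ≤ 1 := by
    calc x * (d : ℝ) ≤ ((d : ℝ))⁻¹ * (d : ℝ) :=
          mul_le_mul_of_nonneg_right ht0le hdpos.le
      _ = 1 := inv_mul_cancel₀ (ne_of_gt hdpos)
  have hrd : 2 * r + 1 ≤ (d : ℝ) := by
    nlinarith [hr, hs, hs0, hdR]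
  have hkey : 0 ≤ -r * x + (1 + r) * z + (1 / 2) * (1 - x - z) := by
    nlinarith [mul_nonneg hr0 ht1re, ht1re, ht0re, hx, hrd,
      mul_nonneg ht0re (by linarith : (0 : ℝ) ≤ (d : ℝ) - (2 * r + 1))]
  exact_mod_cast hkey
end

section
/- Let dim H_A = dim H_B = d and set D = dim(H_A ⊗ H_B) = d². Let {E_k} and {E'_l} be two families of d² mutually orthogonal maximally entangled projections with Σ_k E_k = Σ_l E'_l = I, and let 0 ≤ r ≤ (√(2D) − 2)/4. Define x = −rE₁ + (1+r)E₂ + (1/2)Σ_{k≥3}E_k and y = −rE'₁ + (1+r)E'₂ + (1/2)Σ_{l≥3}E'_l. Then Tr(xy) ≥ 0. -/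
open scoped ComplexOrder Kronecker

lemma psd_trace_nonneg {n : Type*} [Fintype n] [DecidableEq n] {M : Matrix n n ℂ}
    (h : M.PosSemidef) : 0 ≤ M.trace := by
  have hd : ∀ i, 0 ≤ M i i := fun i => by
    exact h.diag_nonneg
  exact Finset.sum_nonneg fun i _ => hd i

lemma proj_trace_nonneg {n : Type*} [Fintype n] [DecidableEq n] {P Q : Matrix n n ℂ}
    (hP : P.IsHermitian) (hP2 : P * P = P) (hQ : Q.IsHermitian) (hQ2 : Q * Q = Q) :
    0 ≤ (P * Q).trace := by
  have h := psd_trace_nonneg (Matrix.posSemidef_conjTranspose_mul_self (Q * P))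
  have e : (Q * P).conjTranspose * (Q * P) = P * Q * P := by
    rw [Matrix.conjTranspose_mul, hP.eq, hQ.eq]
    calc P * Q * (Q * P) = P * (Q * Q) * P := by noncomm_ring
    _ = P * Q * P := by rw [hQ2]
  rw [e, Matrix.trace_mul_comm, ← Matrix.mul_assoc, hP2] at h
  exact h

lemma proj_trace_le {n : Type*} [Fintype n] [DecidableEq n] {P Q : Matrix n n ℂ}
    (hP : P.IsHermitian) (hP2 : P * P = P) (hQ : Q.IsHermitian) (hQ2 : Q * Q = Q) :
    (P * Q).trace ≤ P.trace := by
  have hQ' : (1 - Q).IsHermitian := (Matrix.isHermitian_one).sub hQ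
  have hQ2' : (1 - Q) * (1 - Q) = 1 - Q := by noncomm_ring [hQ2]
  have h := proj_trace_nonneg hP hP2 hQ' hQ2'
  rw [Matrix.mul_sub, Matrix.mul_one, Matrix.trace_sub] at h
  exact sub_nonneg.mp h

lemma exists_real_of_nonneg {z : ℂ} (h : 0 ≤ z) : ∃ t : ℝ, 0 ≤ t ∧ z = (t : ℂ) := by
  obtain ⟨h1, h2⟩ := Complex.le_def.mp h
  exact ⟨z.re, by simpa using h1, by apply Complex.ext <;> simp [← h2]⟩

theorem npm_inner_nonneg (d : ℕ) (hd : 1 < d)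
    (E E' : Fin (d ^ 2) → Matrix (Fin d × Fin d) (Fin d × Fin d) ℂ)
    (hME : ∀ k, IsMEProj d (E k)) (hME' : ∀ l, IsMEProj d (E' l))
    (horth : ∀ k l, k ≠ l → E k * E l = 0)
    (horth' : ∀ k l, k ≠ l → E' k * E' l = 0)
    (hsum : ∑ k, E k = 1) (hsum' : ∑ l, E' l = 1)
    (r : ℝ) (hr0 : 0 ≤ r) (hr : r ≤ (Real.sqrt (2 * d ^ 2) - 2) / 4)
    (x y : Matrix (Fin d × Fin d) (Fin d × Fin d) ℂ)
    (hx : x = (-(r : ℂ)) • E ⟨0, by nlinarith⟩ + ((1 + r : ℝ) : ℂ) • E ⟨1, by nlinarith⟩ +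
        (1 / 2 : ℂ) • ∑ k ∈ Finset.univ.filter (fun k : Fin (d ^ 2) => (k : ℕ) ≠ 0 ∧ (k : ℕ) ≠ 1), E k)
    (hy : y = (-(r : ℂ)) • E' ⟨0, by nlinarith⟩ + ((1 + r : ℝ) : ℂ) • E' ⟨1, by nlinarith⟩ +
        (1 / 2 : ℂ) • ∑ l ∈ Finset.univ.filter (fun l : Fin (d ^ 2) => (l : ℕ) ≠ 0 ∧ (l : ℕ) ≠ 1), E' l) :
    0 ≤ (x * y).trace := by
  have hd2 : 1 < d ^ 2 := by nlinarith
  set i0 : Fin (d ^ 2) := ⟨0, by nlinarith⟩ with hi0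
  set i1 : Fin (d ^ 2) := ⟨1, by nlinarith⟩ with hi1
  have hne : i0 ≠ i1 := by simp [hi0, hi1, Fin.ext_iff]
  -- filter sum
  have hset : (Finset.univ.filter (fun k : Fin (d ^ 2) => (k : ℕ) ≠ 0 ∧ (k : ℕ) ≠ 1))
      = Finset.univ \ {i0, i1} := by
    ext k
    simp [hi0, hi1, Fin.ext_iff, not_or]
  have hfs : ∀ (F : Fin (d ^ 2) → Matrix (Fin d × Fin d) (Fin d × Fin d) ℂ),
      (∑ k, F k = 1) →
      (∑ k ∈ Finset.univ.filter (fun k : Fin (d ^ 2) => (k : ℕ) ≠ 0 ∧ (k : ℕ) ≠ 1), F k)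
        = 1 - (F i0 + F i1) := by
    intro F hF
    rw [hset, Finset.sum_sdiff_eq_sub (Finset.subset_univ _), hF, Finset.sum_pair hne]
  rw [hfs E hsum] at hx
  rw [hfs E' hsum'] at hy
  -- facts about the projections
  obtain ⟨hA0h, hA02, hA0t, -, -⟩ := hME i0
  obtain ⟨hA1h, hA12, hA1t, -, -⟩ := hME i1
  obtain ⟨hB0h, hB02, hB0t, -, -⟩ := hME' i0
  obtain ⟨hB1h, hB12, hB1t, -, -⟩ := hME' i1
  -- real traces
  obtain ⟨t00, ht00, e00⟩ := exists_real_of_nonneg (proj_trace_nonneg hA0h hA02 hB0h hB02)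
  obtain ⟨t01, ht01, e01⟩ := exists_real_of_nonneg (proj_trace_nonneg hA0h hA02 hB1h hB12)
  obtain ⟨t10, ht10, e10⟩ := exists_real_of_nonneg (proj_trace_nonneg hA1h hA12 hB0h hB02)
  obtain ⟨t11, ht11, e11⟩ := exists_real_of_nonneg (proj_trace_nonneg hA1h hA12 hB1h hB12)
  have l01 : t01 ≤ 1 := by
    have := proj_trace_le hA0h hA02 hB1h hB12
    rw [e01, hA0t] at this
    exact_mod_cast this
  have l10 : t10 ≤ 1 := by
    have := proj_trace_le hA1h hA12 hB0h hB02
    rw [e10, hA1t] at this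
    exact_mod_cast this
  -- the real inequality
  have key : 0 ≤ (r + 1/2)^2 * (t00 - t01 - t10 + t11) + (d:ℝ)^2 / 4 := by
    have hsq : Real.sqrt (2 * (d:ℝ) ^ 2) ^ 2 = 2 * (d:ℝ) ^ 2 :=
      Real.sq_sqrt (by positivity)
    have hsn : 0 ≤ Real.sqrt (2 * (d:ℝ) ^ 2) := Real.sqrt_nonneg _
    have hr' : r ≤ (Real.sqrt (2 * (d:ℝ) ^ 2) - 2) / 4 := by
      exact_mod_cast hr
    nlinarith [sq_nonneg (r + 1/2), mul_nonneg (sq_nonneg (r + 1/2)) ht00,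
      mul_nonneg (sq_nonneg (r + 1/2)) ht11,
      mul_le_mul_of_nonneg_left l01 (sq_nonneg (r + 1/2)),
      mul_le_mul_of_nonneg_left l10 (sq_nonneg (r + 1/2)),
      sq_nonneg (Real.sqrt (2 * (d:ℝ) ^ 2) / 4 - (r + 1/2))]
  -- compute the trace
  have htr : (x * y).trace =
      (((r + 1/2)^2 * (t00 - t01 - t10 + t11) + (d:ℝ)^2 / 4 : ℝ) : ℂ) := by
    rw [hx, hy]
    simp only [Matrix.add_mul, Matrix.mul_add, Matrix.smul_mul, Matrix.mul_smul, smul_smul,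
      Matrix.sub_mul, Matrix.mul_sub, Matrix.one_mul, Matrix.mul_one,
      Matrix.trace_add, Matrix.trace_sub, Matrix.trace_smul, Matrix.trace_one,
      smul_eq_mul, e00, e01, e10, e11, hA0t, hA1t, hB0t, hB1t,
      Fintype.card_prod, Fintype.card_fin]
    push_cast
    ring
  rw [htr]
  exact_mod_cast key
end
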